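/- arXiv:1512.07603 — 6 statements merged into one kernel-verified Lean document; each statement's English description precedes it below -/
import Mathlib

section
/- Let n ≥ 2 and let x_1, …, x_n be real numbers with mean x̄ = (1/n)·Σ_i x_i and population standard deviation s = √((1/n)·Σ_i (x_i − x̄)²). Then for every index j, x_j ≤ x̄ + √(n−1)·s (Samuelson's inequality). -/
open Finset

variable {ι α : Type*}

theorem Finset.sum_sub_sum_div_card_eq_zero [Field α] [CharZero α] {s : Finset ι}
    (hs : s.Nonempty) (x : ι → α) : ∑ i ∈ s, (x i - (∑ i ∈ s, x i) / #s) = 0 := by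
  have hcard : (#s : α) ≠ 0 := by exact_mod_cast hs.card_pos.ne'
  rw [sum_sub_distrib, sum_const, nsmul_eq_mul, mul_div_cancel₀ _ hcard, sub_self]

/-- Cauchy–Schwarz on `s.erase j`, whose terms sum to `-d j` since all of `s` sums to `0`. -/
theorem Finset.card_mul_sq_le_of_sum_eq_zero [Field α] [LinearOrder α] [IsStrictOrderedRing α]
    {s : Finset ι} {d : ι → α} (hd : ∑ i ∈ s, d i = 0) {j : ι} (hj : j ∈ s) :
    #s * d j ^ 2 ≤ (#s - 1) * ∑ i ∈ s, d i ^ 2 := by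
  classical
  have hsum : ∑ i ∈ s.erase j, d i = -d j := by
    rw [← add_eq_zero_iff_eq_neg, sum_erase_add _ _ hj, hd]
  have hsq : ∑ i ∈ s, d i ^ 2 = ∑ i ∈ s.erase j, d i ^ 2 + d j ^ 2 :=
    (sum_erase_add _ _ hj).symm
  have hcard : (#s : α) = #(s.erase j) + 1 := by
    rw [← card_erase_add_one hj, Nat.cast_succ]
  have hcs := sq_sum_le_card_mul_sum_sq (s := s.erase j) (f := d)
  rw [hsum, neg_sq] at hcs
  rw [hsq, hcard]
  linear_combination hcs

theorem samuelson_inequality_general (n : ℕ) (x : Fin n → ℝ)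
    (xbar s : ℝ)
    (hxbar : xbar = (∑ i, x i) / n)
    (hs : s = Real.sqrt ((∑ i, (x i - xbar) ^ 2) / n)) :
    ∀ j, x j ≤ xbar + Real.sqrt (n - 1) * s := by
  intro j
  have hdev : ∑ i, (x i - xbar) = 0 := by
    simpa [hxbar] using sum_sub_sum_div_card_eq_zero ⟨j, mem_univ j⟩ x
  have hkey := card_mul_sq_le_of_sum_eq_zero hdev (mem_univ j)
  rw [card_univ, Fintype.card_fin] at hkey
  have hn : (0 : ℝ) < n := by exact_mod_cast Fin.pos j
  have hsq : (x j - xbar) ^ 2 ≤ (n - 1) * ((∑ i, (x i - xbar) ^ 2) / n) := by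
    rw [mul_div_assoc', le_div_iff₀ hn]
    linarith
  have hdist : x j - xbar ≤ Real.sqrt (n - 1) * s := by
    rw [hs, ← Real.sqrt_mul' _ (by positivity)]
    exact (le_abs_self _).trans (Real.abs_le_sqrt hsq)
  linarith

/-- Samuelson's inequality: every value is at most the mean plus √(n−1) times the
population standard deviation. -/
theorem samuelson_inequality (n : ℕ) (hn : 2 ≤ n) (x : Fin n → ℝ)
    (xbar s : ℝ)
    (hxbar : xbar = (∑ i, x i) / n)
    (hs : s = Real.sqrt ((∑ i, (x i - xbar) ^ 2) / n)) :
    ∀ j, x j ≤ xbar + Real.sqrt (n - 1) * s :=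
  samuelson_inequality_general n x xbar s hxbar hs
end

section
/- Let n ≥ 2 and let x_1, …, x_n be real numbers with mean x̄ = (1/n)·Σ_i x_i and population standard deviation s = √((1/n)·Σ_i (x_i − x̄)²). Then there exists an index j with x_j ≥ x̄ + s/√(n−1) (Brunk's lower bound for the maximum). -/
/-!
Write `d i = x i - x̄`, so `∑ d i = 0`, and let `M = max d`. The other `n - 1` deviations are at
most `M` and all deviations sum to zero, so every `d i ≥ -(n - 1) M`. Hence
`(M - d i) (d i + (n - 1) M) ≥ 0` for all `i`; summing and using `∑ d i = 0` gives
`∑ d i ^ 2 ≤ n (n - 1) M ^ 2`, i.e. `s ≤ √(n - 1) M`.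
-/

open Finset

section Deviations

variable {ι : Type*} [Fintype ι] {d : ι → ℝ} {M : ℝ}

theorem sum_sub_mean_eq_zero (x : ι → ℝ) :
    ∑ i, (x i - (∑ j, x j) / Fintype.card ι) = 0 := by
  rcases isEmpty_or_nonempty ι with hι | hι
  · simp
  rw [sum_sub_distrib, sum_const, card_univ, nsmul_eq_mul,
    mul_div_cancel₀ _ (Nat.cast_ne_zero.mpr Fintype.card_ne_zero), sub_self]

theorem nonneg_of_sum_eq_zero_of_le [Nonempty ι] (hsum : ∑ i, d i = 0) (hM : ∀ i, d i ≤ M) :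
    0 ≤ M := by
  have h : ∑ i, d i ≤ (univ : Finset ι).card • M := sum_le_card_nsmul _ _ _ fun i _ ↦ hM i
  rw [hsum, card_univ, nsmul_eq_mul] at h
  exact nonneg_of_mul_nonneg_right h (Nat.cast_pos.mpr Fintype.card_pos)

theorem neg_le_of_sum_eq_zero_of_le (hsum : ∑ i, d i = 0) (hM : ∀ i, d i ≤ M) (i : ι) :
    -(((Fintype.card ι : ℝ) - 1) * M) ≤ d i := by
  classical
  have hrest : ∑ j ∈ univ.erase i, d j ≤ (univ.erase i).card • M :=
    sum_le_card_nsmul _ _ _ fun j _ ↦ hM j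
  have hcard : ((univ.erase i).card : ℝ) = Fintype.card ι - 1 := by
    rw [card_erase_of_mem (mem_univ i), card_univ, Nat.cast_pred (Fintype.card_pos_iff.mpr ⟨i⟩)]
  rw [nsmul_eq_mul, hcard] at hrest
  linarith [add_sum_erase univ d (mem_univ i)]

theorem sum_sq_le_of_sum_eq_zero_of_le (hsum : ∑ i, d i = 0) (hM : ∀ i, d i ≤ M) :
    ∑ i, d i ^ 2 ≤ Fintype.card ι * (Fintype.card ι - 1) * M ^ 2 := by
  set c : ℝ := Fintype.card ι - 1
  have hprod : ∀ i, 0 ≤ (M - d i) * (d i + c * M) := fun i ↦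
    mul_nonneg (sub_nonneg.mpr (hM i)) (by linarith [neg_le_of_sum_eq_zero_of_le hsum hM i])
  have hexpand : ∑ i, (M - d i) * (d i + c * M) =
      Fintype.card ι * c * M ^ 2 - ∑ i, d i ^ 2 := by
    calc ∑ i, (M - d i) * (d i + c * M)
        = ∑ i, ((1 - c) * M * d i + c * M ^ 2 - d i ^ 2) := sum_congr rfl fun i _ ↦ by ring
      _ = Fintype.card ι * c * M ^ 2 - ∑ i, d i ^ 2 := by
        rw [sum_sub_distrib, sum_add_distrib, ← mul_sum, hsum, sum_const, card_univ,
          nsmul_eq_mul]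
        ring
  linarith [sum_nonneg fun i (_ : i ∈ univ) ↦ hprod i]

end Deviations

/-- Brunk's lower bound for the maximum: some value is at least the mean plus
the population standard deviation divided by √(n−1). -/
theorem brunk_lower_bound (n : ℕ) (hn : 2 ≤ n) (x : Fin n → ℝ)
    (xbar s : ℝ)
    (hxbar : xbar = (∑ i, x i) / n)
    (hs : s = Real.sqrt ((∑ i, (x i - xbar) ^ 2) / n)) :
    ∃ j, x j ≥ xbar + s / Real.sqrt (n - 1) := by
  have : Nonempty (Fin n) := ⟨⟨0, by omega⟩⟩
  have hn1 : (0 : ℝ) < n - 1 := by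
    rw [sub_pos, Nat.one_lt_cast]
    omega
  obtain ⟨j, hmax⟩ := Finite.exists_max fun i ↦ x i - xbar
  have hsum : ∑ i, (x i - xbar) = 0 := by
    simpa [hxbar] using sum_sub_mean_eq_zero x
  have hM : 0 ≤ x j - xbar := nonneg_of_sum_eq_zero_of_le hsum hmax
  have hvar : (∑ i, (x i - xbar) ^ 2) / n ≤ (n - 1) * (x j - xbar) ^ 2 := by
    rw [div_le_iff₀ (by linarith)]
    simpa [mul_comm, mul_left_comm, mul_assoc] using sum_sq_le_of_sum_eq_zero_of_le hsum hmax
  have hs_le : s ≤ Real.sqrt (n - 1) * (x j - xbar) := by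
    rw [hs, ← Real.sqrt_sq hM, ← Real.sqrt_mul hn1.le]
    exact Real.sqrt_le_sqrt hvar
  refine ⟨j, ?_⟩
  have := (div_le_iff₀' (Real.sqrt_pos.mpr hn1)).mpr hs_le
  linarith
end

section
/- Let B be a real n×n matrix (n ≥ 2) with entries b_ij and eigenvalue multiset Λ over ℂ. Then every eigenvalue λ₀ ∈ Λ satisfies Re(λ₀) ≤ (1/n)·tr(B) + (√(n−1)/√n)·√(F_diag + χ_off + h), where F_diag = ((n−1)/n)·Σ_i b_ii² − (2/n)·Σ_{i<j} b_ii·b_jj, χ_off = 2·Σ_{i<j} b_ij·b_ji, and h = Σ_{λ∈Λ} (Im λ)². -/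
/-!
Let `x₁, …, xₙ` be the real parts of the eigenvalues. Their sum is `tr B`, and since
`(Re λ)² = Re (λ²) + (Im λ)²` and `∑ λ² = tr (B²)`, their sum of squares is `tr (B²) + h`. The
identity `∑ λ² = tr (B²)` comes from Vieta's formula for the `(n-2)`-th coefficient of the
characteristic polynomial, which is the sum of the principal `2 × 2` minors. Expanding the traces,
`F_diag + χ_off + h = ∑ xₖ² - (∑ xₖ)² / n`, so the bound is Samuelson's inequality: Cauchy–Schwarz
for the other `n - 1` values bounds how far one value can lie above the mean.
-/

open Finset Matrix Polynomial

theorem Finset.sum_sum_eq_sum_add_two_mul_sum_lt {ι R : Type*} [Fintype ι] [LinearOrder ι]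
    [CommSemiring R] (g : ι → ι → R) (hg : ∀ i j, g i j = g j i) :
    ∑ i, ∑ j, g i j = ∑ i, g i i + 2 * ∑ i, ∑ j with i < j, g i j := by
  have hsplit (i : ι) :
      ∑ j, g i j = ∑ j with j < i, g i j + (g i i + ∑ j with i < j, g i j) := by
    rw [← sum_filter_add_sum_filter_not univ (· < i), ← sum_filter_add_sum_filter_not
      (univ.filter (¬ · < i)) (i < ·), filter_filter, filter_filter]
    have heq : univ.filter (fun j => ¬ j < i ∧ ¬ i < j) = {i} := by
      ext j; simp [le_antisymm_iff, and_comm]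
    have hgt : univ.filter (fun j => ¬ j < i ∧ i < j) = univ.filter (i < ·) := by
      ext j; simpa using le_of_lt
    rw [heq, hgt, sum_singleton]
    ring
  have hswap : ∑ i, ∑ j with j < i, g i j = ∑ i, ∑ j with i < j, g i j := by
    rw [sum_comm' (t' := univ) (s' := fun j => univ.filter (j < ·)) (by simp)]
    exact sum_congr rfl fun i _ => sum_congr rfl fun j _ => hg j i
  simp_rw [hsplit, sum_add_distrib, hswap]
  ring

theorem Complex.re_multiset_sum (s : Multiset ℂ) : s.sum.re = (s.map Complex.re).sum :=
  map_multiset_sum Complex.reAddGroupHom s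

namespace Multiset

theorem two_mul_esymm_two {R : Type*} [CommRing R] (s : Multiset R) :
    2 * s.esymm 2 = s.sum ^ 2 - (s.map (· ^ 2)).sum := by
  induction s using Multiset.induction with
  | empty => simp [esymm, powersetCard_zero_right]
  | cons a s ih =>
    have hcons : (a ::ₘ s).esymm 2 = s.esymm 2 + a * s.sum := by
      simpa [esymm, powersetCard_one, powersetCard_cons]
        using sum_map_mul_left (s := s) (a := a) (f := id)
    rw [hcons, sum_cons, map_cons, sum_cons]
    linear_combination ih

theorem sq_sum_le_card_mul_sum_sq {R : Type*} [Semiring R] [LinearOrder R]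
    [IsStrictOrderedRing R] [ExistsAddOfLE R] (s : Multiset R) :
    s.sum ^ 2 ≤ card s * (s.map (· ^ 2)).sum := by
  obtain ⟨l, rfl⟩ := Quot.exists_rep s
  simpa [Fin.sum_univ_fun_getElem l (· ^ 2)] using
    _root_.sq_sum_le_card_mul_sum_sq (s := (univ : Finset (Fin l.length))) (f := (l[·]))

theorem le_sum_div_card_add_sqrt_mul_sqrt (t : Multiset ℝ) {x : ℝ} (hx : x ∈ t) :
    x ≤ t.sum / card t
      + √(card t - 1) / √(card t) * √((t.map (· ^ 2)).sum - t.sum ^ 2 / card t) := by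
  obtain ⟨u, rfl⟩ := exists_cons_of_mem hx
  set N : ℝ := (card (x ::ₘ u) : ℝ)
  have hN : N = card u + 1 := by simp [N]
  have hNpos : 0 < N := by rw [hN]; positivity
  simp only [sum_cons, map_cons]
  have hcs := u.sq_sum_le_card_mul_sum_sq
  have hdev : (x - (x + u.sum) / N) ^ 2
      ≤ (N - 1) / N * (x ^ 2 + (u.map (· ^ 2)).sum - (x + u.sum) ^ 2 / N) := by
    rw [div_mul_eq_mul_div, le_div_iff₀ hNpos]
    field_simp
    rw [hN]
    nlinarith [hcs]
  have hfac : 0 ≤ (N - 1) / N :=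
    div_nonneg (by linarith [hN, u.card.cast_nonneg (α := ℝ)]) hNpos.le
  calc x ≤ (x + u.sum) / N + |x - (x + u.sum) / N| := by
        linarith [le_abs_self (x - (x + u.sum) / N)]
    _ ≤ _ := by
      rw [← Real.sqrt_div' _ hNpos.le, ← Real.sqrt_mul hfac, ← Real.sqrt_sq_eq_abs]
      gcongr

theorem sum_map_re_sq (s : Multiset ℂ) :
    (s.map (·.re ^ 2)).sum = (s.map (· ^ 2)).sum.re + (s.map (·.im ^ 2)).sum := by
  rw [Complex.re_multiset_sum, map_map, ← sum_map_add]
  refine congrArg sum (map_congr rfl fun z _ => ?_)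
  simp [sq, Complex.mul_re]

end Multiset

namespace Matrix

theorem det_submatrix_pair {ι R : Type*} [DecidableEq ι] [CommRing R] (A : Matrix ι ι R)
    {a b : ι} (hab : a ≠ b) :
    (A.submatrix (Subtype.val : ({a, b} : Finset ι) → ι) Subtype.val).det
      = A a a * A b b - A a b * A b a := by
  let e : Fin 2 ≃ ({a, b} : Finset ι) :=
    (Fintype.equivFinOfCardEq (by rw [Fintype.card_coe, card_pair hab])).symm
  have he0 : (e 0 : ι) ∈ ({a, b} : Finset ι) := (e 0).2
  have he1 : (e 1 : ι) ∈ ({a, b} : Finset ι) := (e 1).2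
  have hne : (e 0 : ι) ≠ e 1 := by simp
  rw [← det_submatrix_equiv_self e, submatrix_submatrix, det_fin_two]
  simp only [mem_insert, mem_singleton, submatrix_apply, Function.comp_apply] at he0 he1 ⊢
  rcases he0 with h0 | h0 <;> rcases he1 with h1 | h1 <;> grind

variable {ι : Type*} [Fintype ι]

theorem trace_sq_eq_sum_add_two_mul_sum_lt [LinearOrder ι] {R : Type*} [CommSemiring R]
    (A : Matrix ι ι R) :
    A.trace ^ 2 = ∑ i, A i i ^ 2 + 2 * ∑ i, ∑ j with i < j, A i i * A j j := by
  rw [trace, sq, sum_mul_sum,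
    Finset.sum_sum_eq_sum_add_two_mul_sum_lt _ fun _ _ => mul_comm _ _]
  simp [sq]

theorem trace_mul_self_eq_sum_add_two_mul_sum_lt [LinearOrder ι] {R : Type*} [CommSemiring R]
    (A : Matrix ι ι R) :
    (A * A).trace = ∑ i, A i i ^ 2 + 2 * ∑ i, ∑ j with i < j, A i j * A j i := by
  simp only [sq]
  rw [← Finset.sum_sum_eq_sum_add_two_mul_sum_lt (fun i j => A i j * A j i)
    fun _ _ => mul_comm _ _]
  simp [trace, mul_apply]

variable [DecidableEq ι]

theorem two_mul_sum_det_submatrix_powersetCard_two {R : Type*} [CommRing R] (A : Matrix ι ι R) :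
    2 * ∑ s ∈ univ.powersetCard 2, (A.submatrix (Subtype.val : s → ι) Subtype.val).det
      = A.trace ^ 2 - (A * A).trace := by
  set G : ι × ι → R := fun p => A p.1 p.1 * A p.2 p.2 - A p.1 p.2 * A p.2 p.1
  have hoffDiag : A.trace ^ 2 - (A * A).trace = ∑ p ∈ univ.offDiag, G p := by
    have hdiag : ∑ p ∈ (univ : Finset ι).diag, G p = 0 :=
      sum_eq_zero fun p hp => by simp_all [G, mem_diag]
    rw [← add_zero (∑ p ∈ _, G p), ← hdiag,
      ← sum_union (disjoint_diag_offDiag _).symm, union_comm,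
      diag_union_offDiag, sum_product]
    simp [G, trace, sq, sum_mul_sum, mul_apply, sum_sub_distrib]
  have hfiber : ∀ s ∈ univ.powersetCard 2,
      ∑ p ∈ univ.offDiag with {p.1, p.2} = s, G p
        = 2 * (A.submatrix (Subtype.val : s → ι) Subtype.val).det := by
    intro s hs
    obtain ⟨a, b, hab, rfl⟩ := card_eq_two.mp (mem_powersetCard.mp hs).2
    have hpairs : univ.offDiag.filter (fun p : ι × ι => {p.1, p.2} = ({a, b} : Finset ι))
        = {(a, b), (b, a)} := by
      ext ⟨c, d⟩
      simp only [mem_filter, mem_offDiag, mem_univ, true_and, mem_insert, mem_singleton,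
        Prod.mk.injEq, ← coe_inj, coe_pair, Set.pair_eq_pair_iff]
      grind
    rw [hpairs, sum_pair (by simp [hab]), det_submatrix_pair A hab]
    simp only [G]
    ring
  rw [hoffDiag, mul_sum, ← sum_fiberwise_of_maps_to
    (g := fun p : ι × ι => ({p.1, p.2} : Finset ι)) (t := univ.powersetCard 2)]
  · exact (sum_congr rfl hfiber).symm
  · intro p hp
    simp_all

theorem sum_sq_roots_charpoly_of_splits {K : Type*} [Field K] (A : Matrix ι ι K)
    (hA : A.charpoly.Splits) (hι : 2 ≤ Fintype.card ι) :
    (A.charpoly.roots.map (· ^ 2)).sum = (A * A).trace := by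
  have hvieta : A.charpoly.coeff (Fintype.card ι - 2) = A.charpoly.roots.esymm 2 := by
    rw [coeff_eq_esymm_roots_of_splits hA (by rw [charpoly_natDegree_eq_dim]; omega),
      charpoly_natDegree_eq_dim, A.charpoly_monic.leadingCoeff, Nat.sub_sub_self hι]
    ring
  have hminors : 2 * A.charpoly.coeff (Fintype.card ι - 2) = A.trace ^ 2 - (A * A).trace := by
    rw [charpoly_coeff_eq_sum_minors A 2 hι, neg_one_sq, one_mul]
    exact A.two_mul_sum_det_submatrix_powersetCard_two
  have hnewton := A.charpoly.roots.two_mul_esymm_two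
  rw [← hvieta, hminors, ← trace_eq_sum_roots_charpoly_of_splits hA] at hnewton
  linear_combination hnewton

end Matrix

/-- Upper eigenvalue bound: every eigenvalue of a real matrix `B` has real part at most
`tr(B)/n + (√(n−1)/√n)·√(F_diag + χ_off + h)`. -/
theorem eigenvalue_re_upper_bound (n : ℕ) (hn : 2 ≤ n) (B : Matrix (Fin n) (Fin n) ℝ)
    (Λ : Multiset ℂ)
    (hΛ : Λ = (Matrix.charpoly (B.map (Complex.ofReal ·))).roots)
    (Fdiag χoff h : ℝ)
    (hF : Fdiag = ((n - 1 : ℝ) / n) * ∑ i, (B i i) ^ 2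
        - (2 / (n : ℝ)) * ∑ i, ∑ j ∈ Finset.univ.filter (fun j => i < j), B i i * B j j)
    (hχ : χoff = 2 * ∑ i, ∑ j ∈ Finset.univ.filter (fun j => i < j), B i j * B j i)
    (hh : h = (Λ.map (fun lam => lam.im ^ 2)).sum) :
    ∀ lam0 ∈ Λ, lam0.re ≤ Matrix.trace B / n
      + (Real.sqrt (n - 1) / Real.sqrt n) * Real.sqrt (Fdiag + χoff + h) := by
  intro lam0 hlam0
  set A : Matrix (Fin n) (Fin n) ℂ := B.map (Complex.ofReal ·)
  have hsplits : A.charpoly.Splits := IsAlgClosed.splits _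
  have hcard : Multiset.card (Λ.map Complex.re) = n := by
    rw [Multiset.card_map, hΛ, splits_iff_card_roots.mp hsplits, charpoly_natDegree_eq_dim,
      Fintype.card_fin]
  have hsum : (Λ.map Complex.re).sum = B.trace := by
    rw [← Complex.re_multiset_sum, hΛ, ← trace_eq_sum_roots_charpoly_of_splits hsplits]
    simp [A, trace]
  have hsum_sq : (Λ.map (·.re ^ 2)).sum = (B * B).trace + h := by
    rw [Multiset.sum_map_re_sq, hh, hΛ, A.sum_sq_roots_charpoly_of_splits hsplits (by simpa)]
    simp [A, trace, mul_apply, Complex.re_sum]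
  have hvar : Fdiag + χoff + h
      = ((Λ.map Complex.re).map (· ^ 2)).sum - (Λ.map Complex.re).sum ^ 2 / n := by
    have hn0 : (n : ℝ) ≠ 0 := by positivity
    rw [Multiset.map_map, Function.comp_def, hsum_sq, hsum, hF, hχ,
      trace_mul_self_eq_sum_add_two_mul_sum_lt, trace_sq_eq_sum_add_two_mul_sum_lt]
    field_simp
    ring
  have hsamuelson := (Λ.map Complex.re).le_sum_div_card_add_sqrt_mul_sqrt
    (Multiset.mem_map_of_mem _ hlam0)
  rwa [hcard, ← hvar, hsum] at hsamuelson
end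

section
/- Let B be a real n×n matrix (n ≥ 2) with entries b_ij and eigenvalue multiset Λ over ℂ, and set F_diag = ((n−1)/n)·Σ_i b_ii² − (2/n)·Σ_{i<j} b_ii·b_jj, χ_off = 2·Σ_{i<j} b_ij·b_ji, h = Σ_{λ∈Λ} (Im λ)². If (1/n)·tr(B) + (1/(√n·√(n−1)))·√(F_diag + χ_off + h) > 0, then B has an eigenvalue with strictly positive real part (the equilibrium associated with B is unstable). -/
/-!
Let `r₁, …, rₙ` be the real parts of the eigenvalues and `μ = tr B / n` their mean. The squares
of the eigenvalues are the eigenvalues of `B²`, by `det (X² - B²) = det (X - B) det (X + B)`, so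
`∑ rₖ² = tr B² + h`, and expanding `tr B²` and `(tr B)²` in entries gives
`F_diag + χ_off + h = ∑ (rₖ - μ)²`. If `a = max rₖ`, then each `rₖ - μ` lies in
`[-(n - 1)(a - μ), a - μ]` because the deviations sum to zero, whence
`∑ (rₖ - μ)² ≤ n (n - 1) (a - μ)²`: the largest real part is at least the given lower bound.
-/

open Finset Matrix Polynomial

theorem Finset.sum_sum_eq_sum_diag_add_two_mul_sum_lt {ι R : Type*} [Fintype ι] [LinearOrder ι]
    [CommSemiring R] (f : ι → ι → R) (hf : ∀ i j, f i j = f j i) :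
    ∑ i, ∑ j, f i j = ∑ i, f i i + 2 * ∑ i, ∑ j ∈ univ.filter (fun j => i < j), f i j := by
  have hsplit : ∀ i, ∑ j, f i j = ∑ j ∈ univ.filter (fun j => j < i), f i j + f i i
      + ∑ j ∈ univ.filter (fun j => i < j), f i j := by
    intro i
    rw [sum_filter, sum_filter, ← Fintype.sum_ite_eq' i (f i), ← sum_add_distrib,
      ← sum_add_distrib]
    refine sum_congr rfl fun j _ => ?_
    rcases lt_trichotomy j i with h | rfl | h
    · simp [h, h.ne, h.not_gt]
    · simp
    · simp [h, h.ne', h.not_gt]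
  have hswap : ∑ i, ∑ j ∈ univ.filter (fun j => j < i), f i j
      = ∑ i, ∑ j ∈ univ.filter (fun j => i < j), f i j := by
    rw [sum_comm' (t' := univ) (s' := fun j => univ.filter fun i => j < i) (by simp)]
    simp_rw [hf]
  simp only [hsplit, sum_add_distrib, hswap]
  ring

namespace Multiset

theorem sum_map_sub_sq (s : Multiset ℝ) (c : ℝ) :
    (s.map fun x => (x - c) ^ 2).sum
      = (s.map (· ^ 2)).sum - 2 * c * s.sum + card s * c ^ 2 := by
  induction s using Multiset.induction with
  | empty => simp
  | cons a t ih =>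
    simp only [map_cons, sum_cons, card_cons, ih]
    push_cast
    ring

variable {s : Multiset ℝ} {μ a : ℝ}

theorem sum_map_sub_sq_le_of_forall_le (hμ : s.sum = card s * μ) (ha : ∀ x ∈ s, x ≤ a) :
    (s.map fun x => (x - μ) ^ 2).sum ≤ card s * (card s - 1) * (a - μ) ^ 2 := by
  set m : ℝ := (card s : ℝ)
  have hgap : ∀ x ∈ s, a - x ≤ m * (a - μ) := fun x hx => by
    have hsum : (s.map (a - ·)).sum = m * (a - μ) := by
      rw [sum_map_sub, map_const', sum_replicate, map_id', hμ, nsmul_eq_mul]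
      ring
    exact hsum ▸ single_le_sum (fun y hy => by
      obtain ⟨z, hz, rfl⟩ := mem_map.1 hy
      exact sub_nonneg.2 (ha z hz)) _ (mem_map_of_mem _ hx)
  -- Sum `(a - x) (x - μ + (m - 1)(a - μ)) ≥ 0`, whose factors are nonnegative by `ha` and `hgap`.
  calc (s.map fun x => (x - μ) ^ 2).sum
      ≤ (s.map fun x => (m - 1) * (a - μ) ^ 2 - (m - 2) * (a - μ) * (x - μ)).sum :=
        sum_map_le_sum_map _ _ fun x hx => by nlinarith [ha x hx, hgap x hx]
    _ = m * (m - 1) * (a - μ) ^ 2 := by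
        rw [sum_map_sub, map_const', sum_replicate, sum_map_mul_left, sum_map_sub, map_const',
          sum_replicate, map_id', hμ, nsmul_eq_mul, nsmul_eq_mul]
        ring

theorem mean_le_of_forall_le (hs : s ≠ 0) (hμ : s.sum = card s * μ) (ha : ∀ x ∈ s, x ≤ a) :
    μ ≤ a := by
  have hm : (0 : ℝ) < card s := by exact_mod_cast card_pos.2 hs
  have := sum_le_card_nsmul s a ha
  rw [nsmul_eq_mul, hμ] at this
  exact le_of_mul_le_mul_left this hm

theorem mean_add_sqrt_sum_map_sub_sq_le (hs : s ≠ 0) (hμ : s.sum = card s * μ)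
    (ha : ∀ x ∈ s, x ≤ a) :
    μ + 1 / (√(card s) * √(card s - 1)) * √(s.map fun x => (x - μ) ^ 2).sum ≤ a := by
  have hμa := mean_le_of_forall_le hs hμ ha
  have hbound : √(s.map fun x => (x - μ) ^ 2).sum ≤ √(card s) * √(card s - 1) * (a - μ) := by
    rw [← Real.sqrt_mul (Nat.cast_nonneg _), ← Real.sqrt_sq (sub_nonneg.2 hμa),
      ← Real.sqrt_mul' _ (sq_nonneg _)]
    exact Real.sqrt_le_sqrt (sum_map_sub_sq_le_of_forall_le hμ ha)
  have hdiv := div_le_of_le_mul₀ (by positivity) (sub_nonneg.2 hμa) (hbound.trans_eq (mul_comm _ _))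
  rw [one_div_mul_eq_div]
  linarith

end Multiset

namespace Matrix

variable {n R : Type*} [Fintype n]

theorem trace_map_ofReal (A : Matrix n n ℝ) : (A.map (Complex.ofReal ·)).trace = A.trace :=
  (AddMonoidHom.map_trace Complex.ofRealHom A).symm

section LinearOrder

variable [LinearOrder n] [CommSemiring R] (A : Matrix n n R)

theorem trace_sq_eq_sum_diag_sq_add :
    (A ^ 2).trace = ∑ i, A i i ^ 2
      + 2 * ∑ i, ∑ j ∈ univ.filter (fun j => i < j), A i j * A j i := by
  have : (A ^ 2).trace = ∑ i, ∑ j, A i j * A j i := by simp [trace, sq, mul_apply]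
  rw [this, sum_sum_eq_sum_diag_add_two_mul_sum_lt _ fun i j => mul_comm _ _]
  simp only [sq]

theorem sq_trace_eq_sum_diag_sq_add :
    A.trace ^ 2 = ∑ i, A i i ^ 2
      + 2 * ∑ i, ∑ j ∈ univ.filter (fun j => i < j), A i i * A j j := by
  rw [trace, sq, sum_mul_sum, sum_sum_eq_sum_diag_add_two_mul_sum_lt _ fun i j => mul_comm _ _]
  simp only [diag, sq]

end LinearOrder

variable [DecidableEq n] [CommRing R]

theorem charpoly_neg (M : Matrix n n R) :
    (-M).charpoly = (-1) ^ Fintype.card n * M.charpoly.comp (-X) := by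
  have hmat : charmatrix (-M) = -(compRingHom (-X)).mapMatrix (charmatrix M) := by
    ext i j : 1
    by_cases hij : i = j
    · subst hij
      simp only [charmatrix_apply_eq, neg_apply, map_neg, RingHom.mapMatrix_apply, map_apply,
        coe_compRingHom, sub_comp, X_comp, C_comp]
      ring
    · simp [charmatrix_apply_ne _ _ _ hij]
  rw [charpoly, hmat, det_neg, ← RingHom.map_det]
  rfl

theorem expand_charpoly_sq (M : Matrix n n R) :
    expand R 2 (M ^ 2).charpoly = M.charpoly * (-M).charpoly := by
  rw [charpoly, charpoly, charpoly, AlgHom.map_det, ← det_mul]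
  congr 1
  apply matPolyEquiv.injective
  rw [map_mul, matPolyEquiv_charmatrix, matPolyEquiv_charmatrix, map_neg, sub_neg_eq_add,
    ← (C M).commute_X.mul_self_sub_mul_self_eq', ← sq, ← sq, ← map_pow]
  exact matPolyEquiv_eq_X_pow_sub_C 2 M

theorem roots_charpoly_sq {K : Type*} [Field K] [IsAlgClosed K] (M : Matrix n n K) :
    (M ^ 2).charpoly.roots = M.charpoly.roots.map (· ^ 2) := by
  set s := M.charpoly.roots
  have hM : M.charpoly = (s.map (X - C ·)).prod :=
    (IsAlgClosed.splits _).eq_prod_roots_of_monic M.charpoly_monic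
  have hcard : Multiset.card s = Fintype.card n := by
    rw [splits_iff_card_roots.mp (IsAlgClosed.splits _), charpoly_natDegree_eq_dim]
  have hneg : (-M).charpoly = (s.map (X + C ·)).prod := by
    rw [charpoly_neg, hM, multiset_prod_comp]
    have : (s.map (X - C ·)).map (·.comp (-X)) = (s.map (X + C ·)).map Neg.neg := by
      simp only [Multiset.map_map]
      refine Multiset.map_congr rfl fun a _ => ?_
      simp only [Function.comp_apply, sub_comp, X_comp, C_comp]
      ring
    rw [this, Multiset.prod_map_neg, Multiset.card_map, hcard, ← mul_assoc, ← mul_pow,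
      neg_one_mul, neg_neg, one_pow, one_mul]
  suffices h : (M ^ 2).charpoly = ((s.map (· ^ 2)).map (X - C ·)).prod by
    rw [h, roots_multiset_prod_X_sub_C]
  apply expand_injective two_pos
  rw [expand_charpoly_sq, hM, hneg, ← Multiset.prod_map_mul, map_multiset_prod, Multiset.map_map,
    Multiset.map_map]
  congr 1
  refine Multiset.map_congr rfl fun a _ => ?_
  simp only [Function.comp_apply, map_pow, map_sub, expand_X, expand_C]
  ring

theorem trace_sq_eq_sum_sq_roots_charpoly {K : Type*} [Field K] [IsAlgClosed K]
    (M : Matrix n n K) : (M ^ 2).trace = (M.charpoly.roots.map (· ^ 2)).sum := by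
  rw [trace_eq_sum_roots_charpoly, roots_charpoly_sq]

variable (B : Matrix n n ℝ)

theorem sum_re_roots_charpoly_map_ofReal :
    ((B.map (Complex.ofReal ·)).charpoly.roots.map Complex.re).sum = B.trace := by
  rw [← Complex.re_multiset_sum, ← trace_eq_sum_roots_charpoly, trace_map_ofReal,
    Complex.ofReal_re]

theorem sum_sq_re_roots_charpoly_map_ofReal :
    ((B.map (Complex.ofReal ·)).charpoly.roots.map (·.re ^ 2)).sum
      = (B ^ 2).trace + ((B.map (Complex.ofReal ·)).charpoly.roots.map (·.im ^ 2)).sum := by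
  set Λ := (B.map (Complex.ofReal ·)).charpoly.roots
  have hsq : (Λ.map (· ^ 2)).sum = ((B ^ 2).trace : ℂ) := by
    rw [← trace_sq_eq_sum_sq_roots_charpoly, ← trace_map_ofReal]
    exact congrArg trace (Matrix.map_pow B Complex.ofRealHom 2).symm
  calc (Λ.map (·.re ^ 2)).sum = (Λ.map fun z => (z ^ 2).re + z.im ^ 2).sum := by
        refine congrArg _ (Multiset.map_congr rfl fun z _ => ?_)
        simp [sq]
    _ = _ := by
        rw [Multiset.sum_map_add, ← Complex.ofReal_re (B ^ 2).trace, ← hsq,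
          Complex.re_multiset_sum, Multiset.map_map]
        rfl

end Matrix

/-- Instability criterion: if the lower eigenvalue bound
`tr(B)/n + (1/(√n·√(n−1)))·√(F_diag + χ_off + h)` is positive, then `B` has an
eigenvalue with strictly positive real part. -/
theorem unstable_of_lower_bound_pos (n : ℕ) (hn : 2 ≤ n) (B : Matrix (Fin n) (Fin n) ℝ)
    (Λ : Multiset ℂ)
    (hΛ : Λ = (Matrix.charpoly (B.map (Complex.ofReal ·))).roots)
    (Fdiag χoff h : ℝ)
    (hF : Fdiag = ((n - 1 : ℝ) / n) * ∑ i, (B i i) ^ 2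
        - (2 / (n : ℝ)) * ∑ i, ∑ j ∈ Finset.univ.filter (fun j => i < j), B i i * B j j)
    (hχ : χoff = 2 * ∑ i, ∑ j ∈ Finset.univ.filter (fun j => i < j), B i j * B j i)
    (hh : h = (Λ.map (fun lam => lam.im ^ 2)).sum)
    (hpos : Matrix.trace B / n
      + (1 / (Real.sqrt n * Real.sqrt (n - 1))) * Real.sqrt (Fdiag + χoff + h) > 0) :
    ∃ lam0 ∈ Λ, 0 < lam0.re := by
  set r := Λ.map Complex.re with hr
  have hn0 : (n : ℝ) ≠ 0 := Nat.cast_ne_zero.2 (by omega)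
  have hcard : Multiset.card r = n := by
    rw [Multiset.card_map, hΛ, splits_iff_card_roots.mp (IsAlgClosed.splits _),
      charpoly_natDegree_eq_dim, Fintype.card_fin]
  have hsum : r.sum = Multiset.card r * (B.trace / n) := by
    rw [hcard, hr, hΛ, sum_re_roots_charpoly_map_ofReal]
    field_simp
  have hsq : (r.map (· ^ 2)).sum = (B ^ 2).trace + h := by
    rw [hr, Multiset.map_map, hh, hΛ]
    exact sum_sq_re_roots_charpoly_map_ofReal B
  have hvar : Fdiag + χoff + h = (r.map fun x => (x - B.trace / n) ^ 2).sum := by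
    rw [Multiset.sum_map_sub_sq, hsq, hsum, hcard, trace_sq_eq_sum_diag_sq_add, hF, hχ]
    field_simp
    linear_combination sq_trace_eq_sum_diag_sq_add B
  obtain ⟨lam0, hmem, hmax⟩ := Multiset.exists_max_image Complex.re
    (s := Λ) (by rw [← Multiset.card_pos, ← Multiset.card_map Complex.re, hcard]; omega)
  refine ⟨lam0, hmem, hpos.trans_le ?_⟩
  have hr0 : r ≠ 0 := Multiset.card_pos.1 (by omega)
  have hbound := Multiset.mean_add_sqrt_sum_map_sub_sq_le hr0 hsum (a := lam0.re)
    (by simpa [hr] using hmax)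
  rwa [hcard, ← hvar] at hbound
end

section
/- Let m ≥ 3 be odd and let s be a real number with 4m²/(m²−1) ≤ s ≤ 2m. Then there exist m×m doubly stochastic real matrices W1 and W2 with tr(W1·W2) = 0 and ‖W1‖² + ‖W2‖² = s. (Thus for odd m, the minimum of the symmetric correlation C at fixed interdependence diversity S is 0 for all −2m ≤ S ≤ −4m²/(m²−1).) -/
/-!
Write `m = 2n + 1` and take circulant matrices `W₁ = circ f`, `W₂ = circ g` with `f` supported
on `{1, …, n}` and `g` on `{0, …, n}`. Circulants with nonnegative symbols of total mass 1 are
doubly stochastic, and `tr (W₁ W₂) = m ∑_d f(-d) g(d)` vanishes because `-d ∉ {1, …, n}` for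
`d ∈ {0, …, n}`. Taking for `f`, `g` the mixtures `(1 - t) · uniform + t · point mass`,
`‖W₁‖² + ‖W₂‖² = (1 - t²) (m/n + m/(n+1)) + t² · 2m`, which sweeps continuously from
`m/n + m/(n+1) = 4m²/(m² - 1)` at `t = 0` to `2m` at `t = 1`.
-/

open Finset Matrix

/-- An `m × m` real matrix is doubly stochastic if its entries are nonnegative and
all its rows and columns sum to 1. -/
def IsDoublyStochastic {m : ℕ} (W : Matrix (Fin m) (Fin m) ℝ) : Prop :=
  (∀ k l, 0 ≤ W k l) ∧ (∀ k, ∑ l, W k l = 1) ∧ (∀ l, ∑ k, W k l = 1)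

namespace Matrix

variable {ι α : Type*} [Fintype ι] [AddGroup ι]

theorem sum_circulant_apply_row [AddCommMonoid α] (v : ι → α) (k : ι) :
    ∑ l, circulant v k l = ∑ x, v x :=
  Fintype.sum_equiv (Equiv.subLeft k) _ _ fun _ => rfl

theorem sum_circulant_apply_col [AddCommMonoid α] (v : ι → α) (l : ι) :
    ∑ k, circulant v k l = ∑ x, v x :=
  Fintype.sum_equiv (Equiv.subRight l) _ _ fun _ => rfl

theorem sum_sum_circulant_apply_sq [Semiring α] (v : ι → α) :
    ∑ k, ∑ l, circulant v k l ^ 2 = Fintype.card ι • ∑ x, v x ^ 2 := by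
  rw [← card_univ, ← sum_const]
  exact sum_congr rfl fun k _ => Fintype.sum_equiv (Equiv.subLeft k) _ _ fun _ => rfl

theorem trace_circulant [AddCommMonoid α] (v : ι → α) :
    trace (circulant v) = Fintype.card ι • v 0 := by
  simp [trace, circulant_apply]

theorem trace_circulant_mul_circulant [NonUnitalNonAssocSemiring α] (v w : ι → α) :
    trace (circulant v * circulant w) = Fintype.card ι • ∑ d, v (-d) * w d := by
  simp [circulant_mul, trace_circulant, mulVec, dotProduct, circulant_apply]

end Matrix

theorem isDoublyStochastic_circulant {m : ℕ} [NeZero m] {v : Fin m → ℝ} (hv : ∀ x, 0 ≤ v x)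
    (hsum : ∑ x, v x = 1) : IsDoublyStochastic (circulant v) :=
  ⟨fun _ _ => hv _, fun k => (sum_circulant_apply_row v k).trans hsum,
    fun l => (sum_circulant_apply_col v l).trans hsum⟩

section MixWeight

variable {ι : Type*} [DecidableEq ι]

noncomputable def mixWeight (S : Finset ι) (a : ι) (t : ℝ) (x : ι) : ℝ :=
  (if x ∈ S then (1 - t) / #S else 0) + if x = a then t else 0

variable {S : Finset ι} {a : ι} {t : ℝ}

theorem mixWeight_nonneg (ht₀ : 0 ≤ t) (ht₁ : t ≤ 1) (x : ι) : 0 ≤ mixWeight S a t x := by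
  unfold mixWeight
  have : 0 ≤ (1 - t) / #S := div_nonneg (by linarith) (Nat.cast_nonneg _)
  split_ifs <;> linarith

theorem mixWeight_of_notMem (ha : a ∈ S) {x : ι} (hx : x ∉ S) : mixWeight S a t x = 0 := by
  simp [mixWeight, hx, ne_of_mem_of_not_mem ha hx |>.symm]

theorem sum_mixWeight [Fintype ι] (ha : a ∈ S) : ∑ x, mixWeight S a t x = 1 := by
  have : (#S : ℝ) ≠ 0 := Nat.cast_ne_zero.2 (card_ne_zero_of_mem ha)
  simp only [mixWeight, sum_add_distrib, sum_ite_mem, univ_inter, sum_const, nsmul_eq_mul,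
    sum_ite_eq', mem_univ, ↓reduceIte]
  field_simp
  ring

theorem sum_mixWeight_sq [Fintype ι] (ha : a ∈ S) :
    ∑ x, mixWeight S a t x ^ 2 = (1 - t ^ 2) / #S + t ^ 2 := by
  have : (#S : ℝ) ≠ 0 := Nat.cast_ne_zero.2 (card_ne_zero_of_mem ha)
  simp only [mixWeight, add_sq, ite_pow, ne_eq, OfNat.ofNat_ne_zero, not_false_eq_true, zero_pow,
    mul_ite, mul_zero, ite_mul, zero_mul, sum_add_distrib, sum_ite_mem, univ_inter, sum_const,
    nsmul_eq_mul, sum_ite_eq', mem_univ, ↓reduceIte, ha, add_left_inj]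
  field_simp
  ring

end MixWeight

theorem exists_mem_Icc_one_sub_sq_mul_add_sq_mul_eq {A B s : ℝ} (hA : A ≤ s) (hB : s ≤ B) :
    ∃ t ∈ Set.Icc (0 : ℝ) 1, (1 - t ^ 2) * A + t ^ 2 * B = s :=
  intermediate_value_Icc zero_le_one (by fun_prop) ⟨by simpa using hA, by simpa using hB⟩

def posHalf (n : ℕ) : Finset (Fin (2 * n + 1)) :=
  (Icc 1 n).attachFin fun _ h => by rw [mem_Icc] at h; omega

def nonnegHalf (n : ℕ) : Finset (Fin (2 * n + 1)) :=
  (Iic n).attachFin fun _ h => by rw [mem_Iic] at h; omega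

theorem card_posHalf (n : ℕ) : #(posHalf n) = n := by
  simp [posHalf]

theorem card_nonnegHalf (n : ℕ) : #(nonnegHalf n) = n + 1 := by
  simp [nonnegHalf]

theorem zero_mem_nonnegHalf (n : ℕ) : 0 ∈ nonnegHalf n := by
  simp [nonnegHalf]

theorem neg_notMem_posHalf {n : ℕ} {d : Fin (2 * n + 1)} (hd : d ∈ nonnegHalf n) :
    -d ∉ posHalf n := by
  simp only [nonnegHalf, posHalf, mem_attachFin, mem_Iic, mem_Icc, Fin.val_neg'] at hd ⊢
  rcases Nat.eq_zero_or_pos d.val with h | h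
  · simp [h]
  · rw [Nat.mod_eq_of_lt (by omega)]; omega

/-- For odd `m ≥ 3` and every `4m²/(m²−1) ≤ s ≤ 2m`, there exist doubly stochastic
`W1, W2` with `tr(W1·W2) = 0` and `‖W1‖² + ‖W2‖² = s`: the minimum of the symmetric
correlation at fixed interdependence diversity `S = −s` is 0. -/
theorem min_symmetric_correlation_zero_odd (m : ℕ) (hm : 3 ≤ m) (hmo : Odd m)
    (s : ℝ) (hs : 4 * (m : ℝ) ^ 2 / ((m : ℝ) ^ 2 - 1) ≤ s) (hs2m : s ≤ 2 * m) :
    ∃ W1 W2 : Matrix (Fin m) (Fin m) ℝ,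
      IsDoublyStochastic W1 ∧ IsDoublyStochastic W2 ∧
      Matrix.trace (W1 * W2) = 0 ∧
      (∑ k, ∑ l, (W1 k l) ^ 2) + (∑ k, ∑ l, (W2 k l) ^ 2) = s := by
  obtain ⟨n, rfl⟩ := hmo
  obtain ⟨a, ha⟩ : (posHalf n).Nonempty := card_pos.1 (by rw [card_posHalf]; omega)
  have h0 := zero_mem_nonnegHalf n
  have hn : (n : ℝ) ≠ 0 := by norm_cast; omega
  have hA : 4 * ((2 * n + 1 : ℕ) : ℝ) ^ 2 / (((2 * n + 1 : ℕ) : ℝ) ^ 2 - 1) =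
      (2 * n + 1) / n + (2 * n + 1) / (n + 1) := by
    push_cast
    rw [show (2 * n + 1 : ℝ) ^ 2 - 1 = 4 * n * (n + 1) by ring]
    field_simp
    ring
  obtain ⟨t, ⟨ht₀, ht₁⟩, rfl⟩ := exists_mem_Icc_one_sub_sq_mul_add_sq_mul_eq (hA ▸ hs) hs2m
  refine ⟨circulant (mixWeight (posHalf n) a t), circulant (mixWeight (nonnegHalf n) 0 t),
    isDoublyStochastic_circulant (mixWeight_nonneg ht₀ ht₁) (sum_mixWeight ha),
    isDoublyStochastic_circulant (mixWeight_nonneg ht₀ ht₁) (sum_mixWeight h0), ?_, ?_⟩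
  · refine (trace_circulant_mul_circulant _ _).trans (smul_eq_zero_of_right _ ?_)
    refine sum_eq_zero fun d _ => ?_
    by_cases hd : d ∈ nonnegHalf n
    · rw [mixWeight_of_notMem ha (neg_notMem_posHalf hd), zero_mul]
    · rw [mixWeight_of_notMem h0 hd, mul_zero]
  · rw [sum_sum_circulant_apply_sq, sum_sum_circulant_apply_sq, sum_mixWeight_sq ha,
      sum_mixWeight_sq h0, card_posHalf, card_nonnegHalf, Fintype.card_fin]
    push_cast
    ring
end

section
/- Let m ≥ 1 be odd and let W1, W2 be m×m doubly stochastic real matrices such that (W1)_{kl} + (W2)_{lk} = 2/m for all indices k, l. Then ‖W1‖² + ‖W2‖² ≤ (4m−2)/m. (Equivalently, for odd m the interdependence diversity along the solution family W1 = (2/m)·J − W2ᵀ satisfies S ≥ −2(2m−1)/m.) -/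
open Finset Matrix

/-!
Since `W2 l k = 2/m - W1 k l`, the bound splits over the rows of `W1`. Writing a row as
`x_l = (1 - s_l)/m`, the row contributes `(2m + 2 ∑ s_l²)/m²`, where `|s_l| ≤ 1` (because
`W1, W2 ≥ 0`) and `∑ s_l = 0`. Then `∑ s_l² ≤ ∑ |s_l| = 2 ∑_{s_l ≥ 0} s_l = 2 ∑_{s_l < 0} (-s_l)`
is at most twice the smaller of the two index counts, which is `≤ m - 1` as `m` is odd.
-/

theorem sum_abs_le_card_sub_one_of_odd {ι : Type*} [Fintype ι] (hodd : Odd (Fintype.card ι))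
    (s : ι → ℝ) (hs : ∀ i, |s i| ≤ 1) (hsum : ∑ i, s i = 0) :
    ∑ i, |s i| ≤ Fintype.card ι - 1 := by
  classical
  set P := univ.filter (fun i => 0 ≤ s i)
  have hsplit : ∑ i, |s i| = ∑ i ∈ P, s i - ∑ i ∈ Pᶜ, s i := by
    rw [← sum_add_sum_compl P, sub_eq_add_neg, ← sum_neg_distrib]
    congr 1 <;> refine sum_congr rfl fun i hi => ?_ <;>
      simp only [P, compl_filter, not_le, mem_filter, mem_univ, true_and] at hi
    · exact abs_of_nonneg hi
    · exact abs_of_neg hi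
  have hbalance : ∑ i ∈ P, s i = -∑ i ∈ Pᶜ, s i := by
    rw [← sum_add_sum_compl P] at hsum; linarith
  have hP : ∑ i ∈ P, s i ≤ #P := by
    simpa using sum_le_sum fun i (_ : i ∈ P) => (le_abs_self (s i)).trans (hs i)
  have hPc : -∑ i ∈ Pᶜ, s i ≤ #Pᶜ := by
    rw [← sum_neg_distrib]
    simpa using sum_le_sum fun i (_ : i ∈ Pᶜ) => (neg_le_abs (s i)).trans (hs i)
  have hcard : 2 * #P + 1 ≤ Fintype.card ι ∨ 2 * #Pᶜ + 1 ≤ Fintype.card ι := by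
    have := card_add_card_compl P
    obtain ⟨k, hk⟩ := hodd
    omega
  rcases hcard with h | h
  · have : (2 * #P + 1 : ℝ) ≤ Fintype.card ι := by exact_mod_cast h
    linarith
  · have : (2 * #Pᶜ + 1 : ℝ) ≤ Fintype.card ι := by exact_mod_cast h
    linarith

theorem sum_sq_le_card_sub_one_of_odd {ι : Type*} [Fintype ι] (hodd : Odd (Fintype.card ι))
    (s : ι → ℝ) (hs : ∀ i, |s i| ≤ 1) (hsum : ∑ i, s i = 0) :
    ∑ i, s i ^ 2 ≤ Fintype.card ι - 1 :=
  (sum_le_sum fun i _ => by nlinarith [sq_abs (s i), abs_nonneg (s i), hs i]).trans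
    (sum_abs_le_card_sub_one_of_odd hodd s hs hsum)

theorem sum_sq_add_sq_sub_le_of_odd {ι : Type*} [Fintype ι] (hodd : Odd (Fintype.card ι))
    (x : ι → ℝ) (hx0 : ∀ i, 0 ≤ x i) (hx2 : ∀ i, x i ≤ 2 / Fintype.card ι)
    (hsum : ∑ i, x i = 1) :
    ∑ i, (x i ^ 2 + (2 / Fintype.card ι - x i) ^ 2) ≤
      (4 * Fintype.card ι - 2) / (Fintype.card ι : ℝ) ^ 2 := by
  have hn : (0 : ℝ) < Fintype.card ι := by exact_mod_cast hodd.pos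
  set n : ℝ := ↑(Fintype.card ι)
  set s : ι → ℝ := fun i => 1 - n * x i
  have hs : ∀ i, |s i| ≤ 1 := fun i => by
    have := (le_div_iff₀' hn).mp (hx2 i)
    rw [abs_le]; constructor <;> nlinarith [hx0 i]
  have hssum : ∑ i, s i = 0 := by
    simp [s, sum_sub_distrib, ← mul_sum, hsum, n]
  have hterm : ∀ i, x i ^ 2 + (2 / n - x i) ^ 2 = (2 + 2 * s i ^ 2) / n ^ 2 := fun i => by
    simp only [s]; field_simp; ring
  rw [sum_congr rfl fun i _ => hterm i, ← sum_div, sum_add_distrib, ← mul_sum]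
  gcongr
  simp only [sum_const, card_univ, nsmul_eq_mul]
  linarith [sum_sq_le_card_sub_one_of_odd hodd s hs hssum]

theorem sq_sum_le_of_odd_complementary_general (m : ℕ) (hmo : Odd m)
    (W1 W2 : Matrix (Fin m) (Fin m) ℝ)
    (h1 : IsDoublyStochastic W1) (h2 : IsDoublyStochastic W2)
    (hcomp : ∀ k l, W1 k l + W2 l k = 2 / m) :
    (∑ k, ∑ l, (W1 k l) ^ 2) + (∑ k, ∑ l, (W2 k l) ^ 2) ≤ (4 * m - 2) / m := by
  have hm : (0 : ℝ) < m := by exact_mod_cast hmo.pos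
  have hW2 : ∀ k l, W2 k l = 2 / m - W1 l k := fun k l => by linarith [hcomp l k]
  have hrow : ∀ k, ∑ l, (W1 k l ^ 2 + (2 / m - W1 k l) ^ 2) ≤ (4 * m - 2) / (m : ℝ) ^ 2 := by
    intro k
    simpa using sum_sq_add_sq_sub_le_of_odd (by simpa using hmo) (W1 k) (h1.1 k)
      (fun l => by simpa using (hW2 l k ▸ h2.1 l k : (0 : ℝ) ≤ 2 / m - W1 k l))
      (h1.2.1 k)
  calc (∑ k, ∑ l, W1 k l ^ 2) + ∑ k, ∑ l, W2 k l ^ 2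
      = ∑ k, ∑ l, (W1 k l ^ 2 + (2 / m - W1 k l) ^ 2) := by
        simp only [hW2, sum_add_distrib]
        rw [sum_comm (f := fun k l => (2 / (m : ℝ) - W1 l k) ^ 2)]
    _ ≤ ∑ _k : Fin m, (4 * m - 2) / (m : ℝ) ^ 2 := sum_le_sum fun k _ => hrow k
    _ = (4 * m - 2) / m := by
        simp only [sum_const, card_univ, Fintype.card_fin, nsmul_eq_mul]
        field_simp

/-- For odd `m`, if doubly stochastic `W1, W2` satisfy `(W1)_{kl} + (W2)_{lk} = 2/m`
for all `k, l`, then `‖W1‖² + ‖W2‖² ≤ (4m−2)/m`; equivalently, along the family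
`W1 = (2/m)·J − W2ᵀ` the interdependence diversity satisfies `S ≥ −2(2m−1)/m`. -/
theorem sq_sum_le_of_odd_complementary (m : ℕ) (hm : 1 ≤ m) (hmo : Odd m)
    (W1 W2 : Matrix (Fin m) (Fin m) ℝ)
    (h1 : IsDoublyStochastic W1) (h2 : IsDoublyStochastic W2)
    (hcomp : ∀ k l, W1 k l + W2 l k = 2 / m) :
    (∑ k, ∑ l, (W1 k l) ^ 2) + (∑ k, ∑ l, (W2 k l) ^ 2) ≤ (4 * m - 2) / m :=
  sq_sum_le_of_odd_complementary_general m hmo W1 W2 h1 h2 hcomp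
end
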